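/- Let f : [0,1] → ℝⁿ be a regular smooth curve with curvature vector κ. Then for all k ∈ ℕ, all real p ≥ 2 and all integers 0 ≤ i < k, there is a constant C = C(n,k,p) such that ‖∇ₛⁱκ‖_p ≤ C ‖κ‖₂^{1−α} ‖κ‖_{k,2}^{α}, where α = (i + ½ − 1/p)/k and the norms are the scale-invariant norms. -/

import Mathlib

/-!
Write `uⱼ = ∇ₛʲκ`. Every `uⱼ` is normal to the curve, so `∂ₛ⟨uⱼ, uₘ⟩ = ⟨uⱼ₊₁, uₘ⟩ + ⟨uⱼ, uₘ₊₁⟩`.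
Comparing `|uⱼ|²` with its minimum gives the Agmon bound
`sup |uⱼ|² ≤ 2 ∫ |uⱼ| |uⱼ₊₁| ds + L⁻¹ ∫ |uⱼ|² ds`, and integrating `∂ₛ⟨uⱼ, uⱼ₊₁⟩` gives
`∫ |uⱼ₊₁|² ds ≤ (boundary terms) + ∫ |uⱼ| |uⱼ₊₂| ds`. With Cauchy–Schwarz and scaling, for
`Aⱼ = ‖uⱼ‖₂` and a bound `Sⱼ` of `L^{j+1} sup |uⱼ|` these become
`Sⱼ² ≤ 2 Aⱼ Aⱼ₊₁ + Aⱼ²` and `Aⱼ₊₁² ≤ 2 Sⱼ Sⱼ₊₁ + Aⱼ Aⱼ₊₂`, hence by Young's inequality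
`Aⱼ₊₁ ≤ M (ε Aⱼ₊₂ + ε⁻¹ Aⱼ)` for all `ε ∈ (0, 1]`. Normalising by the geometric sequence
`A₀ ρʲ` with `ρᵏ = ‖κ‖_{k,2} / A₀`, a discrete maximum principle bounds `Aⱼ ≤ C A₀ ρʲ`.
Finally `‖uᵢ‖_p ≤ Sᵢ^{1-2/p} Aᵢ^{2/p}` interpolates between `L²` and `L^∞`.
-/

open Set MeasureTheory
open scoped RealInnerProductSpace

noncomputable section

/-- Arc-length derivative `∂ₛ g = |∂ₓ f|⁻¹ ∂ₓ g` along the curve `f`. -/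
def sDeriv {n : ℕ} {F : Type*} [NormedAddCommGroup F] [NormedSpace ℝ F]
    (f : ℝ → EuclideanSpace ℝ (Fin n)) (g : ℝ → F) (x : ℝ) : F :=
  ‖deriv f x‖⁻¹ • deriv g x

/-- The unit tangent `τ = ∂ₛ f`. -/
def tau {n : ℕ} (f : ℝ → EuclideanSpace ℝ (Fin n)) : ℝ → EuclideanSpace ℝ (Fin n) :=
  sDeriv f f

/-- The curvature vector `κ = ∂ₛ² f`. -/
def kappa {n : ℕ} (f : ℝ → EuclideanSpace ℝ (Fin n)) : ℝ → EuclideanSpace ℝ (Fin n) :=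
  sDeriv f (tau f)

/-- Normal projection of the arc-length derivative: `∇ₛψ = ∂ₛψ − ⟨∂ₛψ, τ⟩ τ`. -/
def nablaS {n : ℕ} (f ψ : ℝ → EuclideanSpace ℝ (Fin n)) (x : ℝ) :
    EuclideanSpace ℝ (Fin n) :=
  sDeriv f ψ x - ⟪sDeriv f ψ x, tau f x⟫ • tau f x

/-- Iterated normal arc-length derivative `∇ₛ^m`. -/
def nablaSIter {n : ℕ} (f : ℝ → EuclideanSpace ℝ (Fin n)) :
    ℕ → (ℝ → EuclideanSpace ℝ (Fin n)) → ℝ → EuclideanSpace ℝ (Fin n)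
  | 0, ψ => ψ
  | m + 1, ψ => nablaS f (nablaSIter f m ψ)

/-- Length of the curve `f` over `[0,1]`. -/
def curveLen {n : ℕ} (f : ℝ → EuclideanSpace ℝ (Fin n)) : ℝ :=
  ∫ x in (0 : ℝ)..1, ‖deriv f x‖

/-- Scale-invariant norm `‖∇ₛⁱκ‖_p = L(f)^{i+1-1/p} (∫₀¹ |∇ₛⁱκ|^p ds)^{1/p}`. -/
def knorm {n : ℕ} (f : ℝ → EuclideanSpace ℝ (Fin n)) (i : ℕ) (p : ℝ) : ℝ :=
  curveLen f ^ ((i : ℝ) + 1 - 1 / p) *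
    (∫ x in (0 : ℝ)..1, ‖nablaSIter f i (kappa f) x‖ ^ p * ‖deriv f x‖) ^ (1 / p)

/-- Scale-invariant norm `‖κ‖_{k,p} = Σ_{i=0}^{k} ‖∇ₛⁱκ‖_p`. -/
def knormSum {n : ℕ} (f : ℝ → EuclideanSpace ℝ (Fin n)) (k : ℕ) (p : ℝ) : ℝ :=
  ∑ i ∈ Finset.range (k + 1), knorm f i p

open Filter Topology
open scoped ContDiff

section ThreeTerm

theorem le_mul_add_inv_mul_of_sq_le {a b c s t ε : ℝ} (ha : 0 ≤ a) (hb : 0 ≤ b) (hc : 0 ≤ c)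
    (hs : s ^ 2 ≤ 2 * a * b + a ^ 2) (ht : t ^ 2 ≤ 2 * b * c + b ^ 2)
    (hb2 : b ^ 2 ≤ 2 * s * t + a * c) (hε : 0 < ε) (hε1 : ε ≤ 1) :
    b ≤ 29 * (ε * c + ε⁻¹ * a) := by
  have young : 16 * ε * (s * t) ≤ ε ^ 2 * t ^ 2 + 64 * s ^ 2 := by
    nlinarith [sq_nonneg (ε * t - 8 * s)]
  -- after `young`, each cross term is absorbed into `(ε b)² / 8`, using `ε ≤ 1`
  have key : (ε * b) ^ 2 ≤ (ε ^ 2 * c + 29 * a) ^ 2 := by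
    nlinarith [mul_le_mul_of_nonneg_left hb2 (sq_nonneg ε),
      mul_le_mul_of_nonneg_left hs (by positivity : (0:ℝ) ≤ 8 * ε),
      mul_le_mul_of_nonneg_left ht (by positivity : (0:ℝ) ≤ ε ^ 3 / 8),
      sq_nonneg (ε * b - ε ^ 2 * c), sq_nonneg (ε * b - 64 * a), sq_nonneg (ε ^ 2 * c - a),
      mul_le_mul_of_nonneg_right hε1 (by positivity : (0:ℝ) ≤ ε ^ 2 * b ^ 2),
      mul_le_mul_of_nonneg_right hε1 (by positivity : (0:ℝ) ≤ a ^ 2),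
      mul_nonneg (mul_nonneg ha hc) (sq_nonneg ε)]
  have hεb := (pow_le_pow_iff_left₀ (by positivity) (by positivity) two_ne_zero).1 key
  calc b ≤ (ε ^ 2 * c + 29 * a) / ε := by rw [le_div_iff₀ hε]; linarith
    _ = ε * c + 29 * ε⁻¹ * a := by field_simp
    _ ≤ 29 * (ε * c + ε⁻¹ * a) := by nlinarith [mul_nonneg hε.le hc]

variable {M : ℝ} {k : ℕ}

theorem le_pow_mul_max_of_three_term (hM : 1 ≤ M) {x : ℕ → ℝ} (hk : x k ≤ 1)
    (hstep : ∀ j, j + 1 < k → ∀ t, 0 < t → t ≤ 1 →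
      x (j + 1) ≤ M * (t * x (j + 2) + t⁻¹ * x j)) :
    ∀ m j, j + 1 + m = k → x (j + 1) ≤ (4 * M ^ 2) ^ m * max (x j) 1 := by
  intro m
  induction m with
  | zero =>
    rintro j rfl
    simpa using hk.trans (le_max_right _ _)
  | succ m ih =>
    intro j hj
    rcases le_or_gt (x (j + 1)) 1 with hle | hgt
    · exact hle.trans (one_le_mul_of_one_le_of_one_le (one_le_pow₀ (by nlinarith))
        (le_max_right _ _))
    have hnext : x (j + 2) ≤ (4 * M ^ 2) ^ m * x (j + 1) := by
      simpa [max_eq_left hgt.le] using ih (j + 1) (by omega)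
    have hKm : 1 ≤ (4 * M ^ 2) ^ m := one_le_pow₀ (by nlinarith)
    -- this choice of `t` absorbs the `x (j + 2)` term into half of the left-hand side
    set t := (2 * M * (4 * M ^ 2) ^ m)⁻¹
    have ht : 0 < t := by positivity
    have ht1 : t ≤ 1 := inv_le_one_of_one_le₀ (by nlinarith)
    have h := hstep j (by omega) t ht ht1
    have half : M * t * x (j + 2) ≤ x (j + 1) / 2 := by
      calc M * t * x (j + 2) ≤ M * t * ((4 * M ^ 2) ^ m * x (j + 1)) := by gcongr
        _ = x (j + 1) / 2 := by simp only [t]; field_simp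
    calc x (j + 1) ≤ 2 * M * t⁻¹ * x j := by nlinarith
      _ = (4 * M ^ 2) ^ (m + 1) * x j := by simp only [t, inv_inv]; ring
      _ ≤ (4 * M ^ 2) ^ (m + 1) * max (x j) 1 := by gcongr; exact le_max_left _ _

theorem le_pow_of_three_term (hM : 1 ≤ M) {x : ℕ → ℝ} (h0 : x 0 ≤ 1) (hk : x k ≤ 1)
    (hstep : ∀ j, j + 1 < k → ∀ t, 0 < t → t ≤ 1 →
      x (j + 1) ≤ M * (t * x (j + 2) + t⁻¹ * x j)) :
    ∀ j ≤ k, x j ≤ (4 * M ^ 2) ^ (k * k) := by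
  have hK : 1 ≤ 4 * M ^ 2 := by nlinarith
  have hmax : ∀ j ≤ k, max (x j) 1 ≤ (4 * M ^ 2) ^ (k * j) := by
    intro j
    induction j with
    | zero => simpa using h0
    | succ j ih =>
      intro hj
      refine max_le ?_ (one_le_pow₀ hK)
      calc x (j + 1) ≤ (4 * M ^ 2) ^ (k - (j + 1)) * max (x j) 1 :=
            le_pow_mul_max_of_three_term hM hk hstep _ j (by omega)
        _ ≤ (4 * M ^ 2) ^ k * (4 * M ^ 2) ^ (k * j) := by
            gcongr
            · omega
            · exact ih (by omega)
        _ = (4 * M ^ 2) ^ (k * (j + 1)) := by ring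
  intro j hj
  exact (le_max_left _ _).trans ((hmax j hj).trans (pow_le_pow_right₀ hK (by gcongr)))

theorem le_mul_pow_of_three_term (hM : 1 ≤ M) {a : ℕ → ℝ} (ha0 : 0 < a 0) {ρ : ℝ} (hρ : 1 ≤ ρ)
    (hk : a k ≤ a 0 * ρ ^ k)
    (hstep : ∀ j, j + 1 < k → ∀ ε, 0 < ε → ε ≤ 1 →
      a (j + 1) ≤ M * (ε * a (j + 2) + ε⁻¹ * a j)) :
    ∀ j ≤ k, a j ≤ (4 * M ^ 2) ^ (k * k) * (a 0 * ρ ^ j) := by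
  have hD : ∀ j, 0 < a 0 * ρ ^ j := fun j => by positivity
  have hx := le_pow_of_three_term hM (x := fun j => a j / (a 0 * ρ ^ j)) (by simp [ha0.ne'])
    ((div_le_one (hD k)).2 hk) ?_
  · intro j hj
    rw [← div_le_iff₀ (hD j)]
    exact hx j hj
  intro j hj t ht ht1
  have h := hstep j hj (t / ρ) (by positivity) ((div_le_one (by positivity)).2 (ht1.trans hρ))
  rw [div_le_iff₀ (hD _)]
  refine h.trans_eq ?_
  have : ρ ≠ 0 := by positivity
  field_simp
  ring

theorem eq_zero_of_three_term {a : ℕ → ℝ} (ha : ∀ j, 0 ≤ a j) (ha0 : a 0 = 0)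
    (hstep : ∀ j, j + 1 < k → ∀ ε, 0 < ε → ε ≤ 1 →
      a (j + 1) ≤ M * (ε * a (j + 2) + ε⁻¹ * a j)) :
    ∀ j < k, a j = 0 := by
  intro j
  induction j with
  | zero => exact fun _ => ha0
  | succ j ih =>
    intro hj
    have h : ∀ ε ∈ Ioc (0 : ℝ) 1, a (j + 1) ≤ M * a (j + 2) * ε := fun ε hε => by
      simpa [ih (by omega), mul_comm, mul_left_comm] using hstep j hj ε hε.1 hε.2
    have hlim : Tendsto (fun ε => M * a (j + 2) * ε) (𝓝[>] 0) (𝓝 0) := by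
      simpa using ((continuous_const_mul (M * a (j + 2))).tendsto 0).mono_left nhdsWithin_le_nhds
    exact le_antisymm (ge_of_tendsto hlim (eventually_of_mem (Ioc_mem_nhdsGT one_pos) h)) (ha _)

end ThreeTerm

theorem rpow_one_sub_mul_rpow_le {S A H r θ : ℝ} (hS : 0 ≤ S) (hA : 0 ≤ A) (hSH : S ≤ H)
    (hAH : A ≤ H * r) (hr : 0 ≤ r) (hθ0 : 0 ≤ θ) (hθ1 : θ ≤ 1) :
    S ^ (1 - θ) * A ^ θ ≤ H * r ^ θ := by
  have hH : 0 ≤ H := hS.trans hSH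
  calc S ^ (1 - θ) * A ^ θ ≤ H ^ (1 - θ) * (H * r) ^ θ := by
        gcongr
    _ = H * r ^ θ := by
        rw [Real.mul_rpow hH hr, ← mul_assoc, ← Real.rpow_add' hH (by simp), sub_add_cancel,
          Real.rpow_one]

section Interpolation

open Finset

variable {k i : ℕ} {p : ℝ} {A : ℕ → ℝ} {N : ℝ}

theorem mul_rpow_mul_inv_rpow_eq {a B : ℝ} (ha : 0 < a) (hB : 0 < B) (hk : k ≠ 0) :
    a * (((B / a) ^ (1 / (2 * k : ℝ))) ^ (2 * i + 1) * ((B / a) ^ (1 / (2 * k : ℝ)))⁻¹ ^ (2 / p))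
      = a ^ (1 - ((i : ℝ) + 1 / 2 - 1 / p) / k) * B ^ (((i : ℝ) + 1 / 2 - 1 / p) / k) := by
  have hBa : 0 < B / a := by positivity
  have hexp : ((B / a) ^ (1 / (2 * k : ℝ))) ^ (2 * i + 1)
      * ((B / a) ^ (1 / (2 * k : ℝ)))⁻¹ ^ (2 / p) = (B / a) ^ (((i : ℝ) + 1 / 2 - 1 / p) / k) := by
    rw [Real.inv_rpow (by positivity), ← Real.rpow_neg (by positivity), ← Real.rpow_natCast,
      ← Real.rpow_mul hBa.le, ← Real.rpow_mul hBa.le, ← Real.rpow_add hBa]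
    congr 1
    have hk' : (k : ℝ) ≠ 0 := Nat.cast_ne_zero.2 hk
    push_cast
    field_simp
    ring
  rw [hexp, Real.div_rpow hB.le ha.le, Real.rpow_sub ha, Real.rpow_one]
  field_simp

theorem le_rpow_mul_rpow_of_three_term_of_pos {S : ℝ} (hik : i < k) (hp : 2 ≤ p)
    (hA : ∀ j, 0 ≤ A j) (hS : 0 ≤ S) (hagmon : S ^ 2 ≤ 2 * A i * A (i + 1) + A i ^ 2)
    (h0 : 0 < A 0)
    (hstep : ∀ j, j + 1 < k → ∀ ε, 0 < ε → ε ≤ 1 →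
      A (j + 1) ≤ 29 * (ε * A (j + 2) + ε⁻¹ * A j))
    (hN : N ≤ S ^ (1 - 2 / p) * A i ^ (2 / p)) :
    N ≤ 2 * (4 * 29 ^ 2) ^ (k * k) * A 0 ^ (1 - ((i : ℝ) + 1 / 2 - 1 / p) / k)
      * (∑ j ∈ range (k + 1), A j) ^ (((i : ℝ) + 1 / 2 - 1 / p) / k) := by
  set B := ∑ j ∈ range (k + 1), A j
  set C : ℝ := (4 * 29 ^ 2) ^ (k * k)
  have hAB : ∀ j ≤ k, A j ≤ B := fun j hj =>
    single_le_sum (fun j _ => hA j) (mem_range.2 (Nat.lt_succ_of_le hj))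
  have hk : (0 : ℝ) < k := by exact_mod_cast hik.trans_le' (Nat.zero_le i)
  set σ := (B / A 0) ^ (1 / (2 * k : ℝ))
  have hBA : 1 ≤ B / A 0 := (one_le_div h0).2 (hAB 0 (Nat.zero_le k))
  have hσ : 1 ≤ σ := Real.one_le_rpow hBA (by positivity)
  have hσpow : σ ^ (2 * k) = B / A 0 := by
    rw [← Real.rpow_natCast, ← Real.rpow_mul (by linarith),
      show 1 / (2 * k : ℝ) * ((2 * k : ℕ) : ℝ) = 1 by push_cast; field_simp, Real.rpow_one]
  have hchain := le_mul_pow_of_three_term (by norm_num) h0 (one_le_pow₀ hσ)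
    (by rw [← pow_mul, hσpow, mul_div_cancel₀ _ h0.ne']; exact hAB k le_rfl) hstep
  set X := C * A 0 * σ ^ (2 * i)
  have hAi : A i ≤ X := (hchain i hik.le).trans_eq (by rw [← pow_mul]; ring)
  have hAi1 : A (i + 1) ≤ X * σ ^ 2 := (hchain (i + 1) hik).trans_eq (by rw [← pow_mul]; ring)
  have hX : 0 ≤ X := (hA i).trans hAi
  have hSX : S ≤ 2 * X * σ := by
    refine (pow_le_pow_iff_left₀ hS (by positivity) two_ne_zero).1 ?_
    calc S ^ 2 ≤ 2 * X * (X * σ ^ 2) + X ^ 2 := by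
          refine hagmon.trans ?_
          gcongr
          · exact hA _
          · exact hA _
      _ ≤ (2 * X * σ) ^ 2 := by nlinarith [one_le_pow₀ (n := 2) hσ, sq_nonneg X]
  have hAX : A i ≤ 2 * X * σ * σ⁻¹ := by
    rw [mul_inv_cancel_right₀ (by positivity)]
    linarith
  calc N ≤ 2 * X * σ * σ⁻¹ ^ (2 / p) :=
        hN.trans (rpow_one_sub_mul_rpow_le hS (hA i) hSX hAX (by positivity) (by positivity)
          ((div_le_one (by linarith)).2 hp))
    _ = 2 * C * (A 0 * (σ ^ (2 * i + 1) * σ⁻¹ ^ (2 / p))) := by simp only [X]; ring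
    _ = 2 * C * A 0 ^ (1 - ((i : ℝ) + 1 / 2 - 1 / p) / k)
          * B ^ (((i : ℝ) + 1 / 2 - 1 / p) / k) := by
        rw [mul_rpow_mul_inv_rpow_eq h0 (h0.trans_le (hAB 0 (Nat.zero_le k))) (by omega)]
        ring

theorem le_rpow_mul_rpow_of_agmon_ibp (hik : i < k) (hp : 2 ≤ p) {S : ℕ → ℝ}
    (hA : ∀ j, 0 ≤ A j) (hS : ∀ j, 0 ≤ S j)
    (hagmon : ∀ j, S j ^ 2 ≤ 2 * A j * A (j + 1) + A j ^ 2)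
    (hibp : ∀ j, A (j + 1) ^ 2 ≤ 2 * S j * S (j + 1) + A j * A (j + 2))
    (hN : N ≤ S i ^ (1 - 2 / p) * A i ^ (2 / p)) :
    N ≤ 2 * (4 * 29 ^ 2) ^ (k * k) * A 0 ^ (1 - ((i : ℝ) + 1 / 2 - 1 / p) / k)
      * (∑ j ∈ range (k + 1), A j) ^ (((i : ℝ) + 1 / 2 - 1 / p) / k) := by
  have hstep : ∀ j, j + 1 < k → ∀ ε, 0 < ε → ε ≤ 1 →
      A (j + 1) ≤ 29 * (ε * A (j + 2) + ε⁻¹ * A j) := fun j _ ε hε hε1 =>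
    le_mul_add_inv_mul_of_sq_le (hA _) (hA _) (hA _) (hagmon j) (hagmon (j + 1)) (hibp j) hε hε1
  rcases (hA 0).eq_or_lt with h0 | h0
  · have hAi : A i = 0 := eq_zero_of_three_term hA h0.symm hstep i hik
    rw [hAi, Real.zero_rpow (by positivity), mul_zero] at hN
    have hB : 0 ≤ ∑ j ∈ range (k + 1), A j := sum_nonneg fun j _ => hA j
    exact hN.trans (by positivity)
  · exact le_rpow_mul_rpow_of_three_term_of_pos hik hp hA (hS i) (hagmon i) h0 hstep hN

end Interpolation

theorem integral_mul_mul_le_sqrt_mul_sqrt {P Q w : ℝ → ℝ} {a b : ℝ} (hab : a ≤ b)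
    (hP : ContinuousOn P (Icc a b)) (hQ : ContinuousOn Q (Icc a b))
    (hw : ContinuousOn w (Icc a b)) (hw0 : ∀ x ∈ Icc a b, 0 ≤ w x) :
    ∫ x in a..b, P x * Q x * w x
      ≤ √(∫ x in a..b, P x ^ 2 * w x) * √(∫ x in a..b, Q x ^ 2 * w x) := by
  set X := ∫ x in a..b, P x * Q x * w x
  set A := ∫ x in a..b, P x ^ 2 * w x
  set B := ∫ x in a..b, Q x ^ 2 * w x
  have hii : ∀ {g : ℝ → ℝ}, ContinuousOn g (Icc a b) → IntervalIntegrable g volume a b :=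
    fun hg => hg.intervalIntegrable_of_Icc hab
  have hquad : ∀ t, 0 ≤ A * (t * t) + (-2 * X) * t + B := by
    intro t
    have hexp : ∫ x in a..b, (t * P x - Q x) ^ 2 * w x = A * (t * t) + (-2 * X) * t + B := by
      have hfun : (fun x => (t * P x - Q x) ^ 2 * w x) = fun x =>
          (t * t) * (P x ^ 2 * w x) + (-2 * t) * (P x * Q x * w x) + Q x ^ 2 * w x := by
        ext x; ring
      rw [hfun, intervalIntegral.integral_add, intervalIntegral.integral_add,
        intervalIntegral.integral_const_mul, intervalIntegral.integral_const_mul]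
      · ring
      all_goals exact hii (by fun_prop)
    rw [← hexp]
    exact intervalIntegral.integral_nonneg hab fun x hx => mul_nonneg (sq_nonneg _) (hw0 x hx)
  have hdisc := discrim_le_zero hquad
  rw [discrim] at hdisc
  rw [← Real.sqrt_mul
    (intervalIntegral.integral_nonneg hab fun x hx => mul_nonneg (sq_nonneg _) (hw0 x hx))]
  exact (le_abs_self X).trans (Real.abs_le_sqrt (by nlinarith))

theorem sub_le_integral_abs_deriv {g g' : ℝ → ℝ} {a b x y : ℝ} (hx : x ∈ Icc a b)
    (hy : y ∈ Icc a b) (hg : ∀ t ∈ Icc a b, HasDerivAt g (g' t) t)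
    (hg' : IntervalIntegrable g' volume a b) :
    g x - g y ≤ ∫ t in a..b, |g' t| := by
  have hsub : uIcc y x ⊆ Icc a b := uIcc_subset_Icc hy hx
  have hab : a ≤ b := hx.1.trans hx.2
  rw [← intervalIntegral.integral_eq_sub_of_hasDerivAt (fun t ht => hg t (hsub ht))
    (hg'.mono_set (by rwa [uIcc_of_le hab]))]
  calc ∫ t in y..x, g' t ≤ ‖∫ t in y..x, g' t‖ := Real.le_norm_self _
    _ ≤ ∫ t in uIoc y x, ‖g' t‖ := intervalIntegral.norm_integral_le_integral_norm_uIoc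
    _ ≤ ∫ t in Ioc a b, ‖g' t‖ :=
        setIntegral_mono_set (hg'.1.norm) (Filter.Eventually.of_forall fun t => norm_nonneg _)
          (Filter.Eventually.of_forall (Ioc_subset_Ioc (le_min hy.1 hx.1) (max_le hy.2 hx.2)))
    _ = ∫ t in a..b, |g' t| := (intervalIntegral.integral_of_le hab).symm

section Curve

variable {n : ℕ} {f : ℝ → EuclideanSpace ℝ (Fin n)}

theorem continuous_norm_deriv (hf : ContDiff ℝ ∞ f) : Continuous fun x => ‖deriv f x‖ :=
  (hf.continuous_deriv (by simp)).norm

theorem isOpen_setOf_deriv_ne_zero (hf : ContDiff ℝ ∞ f) : IsOpen {x | deriv f x ≠ 0} :=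
  isOpen_ne_fun (hf.continuous_deriv (by simp)) continuous_const

theorem contDiffOn_sDeriv {F : Type*} [NormedAddCommGroup F] [NormedSpace ℝ F]
    (hf : ContDiff ℝ ∞ f) {g : ℝ → F} (hg : ContDiffOn ℝ ∞ g {x | deriv f x ≠ 0}) :
    ContDiffOn ℝ ∞ (sDeriv f g) {x | deriv f x ≠ 0} :=
  (((hf.iterate_deriv 1).contDiffOn.norm ℝ fun _ hx => hx).inv
    fun _ hx => norm_ne_zero_iff.2 hx).smul
    (hg.deriv_of_isOpen (isOpen_setOf_deriv_ne_zero hf) le_rfl)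

theorem contDiffOn_tau (hf : ContDiff ℝ ∞ f) : ContDiffOn ℝ ∞ (tau f) {x | deriv f x ≠ 0} :=
  contDiffOn_sDeriv hf hf.contDiffOn

theorem contDiffOn_nablaSIter_kappa (hf : ContDiff ℝ ∞ f) (j : ℕ) :
    ContDiffOn ℝ ∞ (nablaSIter f j (kappa f)) {x | deriv f x ≠ 0} := by
  induction j with
  | zero => exact contDiffOn_sDeriv hf (contDiffOn_tau hf)
  | succ j ih =>
    have h := contDiffOn_sDeriv hf ih
    exact h.sub ((h.inner ℝ (contDiffOn_tau hf)).smul (contDiffOn_tau hf))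

theorem continuousOn_nablaSIter_kappa (hf : ContDiff ℝ ∞ f)
    (hd : ∀ x ∈ Icc (0 : ℝ) 1, deriv f x ≠ 0) (j : ℕ) :
    ContinuousOn (nablaSIter f j (kappa f)) (Icc 0 1) :=
  (contDiffOn_nablaSIter_kappa hf j).continuousOn.mono hd

theorem inner_tau_self {x : ℝ} (hx : deriv f x ≠ 0) : ⟪tau f x, tau f x⟫ = 1 :=
  inner_self_eq_one_of_norm_eq_one (norm_smul_inv_norm hx)

theorem inner_kappa_tau (hf : ContDiff ℝ ∞ f) {x : ℝ} (hx : deriv f x ≠ 0) :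
    ⟪kappa f x, tau f x⟫ = 0 := by
  have hU := (isOpen_setOf_deriv_ne_zero hf).mem_nhds hx
  have hτ := (((contDiffOn_tau hf).contDiffAt hU).differentiableAt (by simp)).hasDerivAt
  have hconst : (fun y => ⟪tau f y, tau f y⟫) =ᶠ[𝓝 x] fun _ => (1 : ℝ) :=
    eventually_of_mem hU fun y hy => inner_tau_self hy
  have h := (hτ.inner ℝ hτ).unique ((hasDerivAt_const x (1 : ℝ)).congr_of_eventuallyEq hconst)
  have h0 : ⟪tau f x, deriv (tau f) x⟫ = 0 := by
    rw [real_inner_comm (tau f x)] at h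
    linarith
  rw [kappa, sDeriv, real_inner_smul_left, real_inner_comm, h0, mul_zero]

theorem inner_nablaSIter_kappa_tau (hf : ContDiff ℝ ∞ f) (j : ℕ) {x : ℝ}
    (hx : deriv f x ≠ 0) : ⟪nablaSIter f j (kappa f) x, tau f x⟫ = 0 := by
  cases j with
  | zero => exact inner_kappa_tau hf hx
  | succ j =>
    simp only [nablaSIter, nablaS, inner_sub_left, real_inner_smul_left, inner_tau_self hx,
      mul_one, sub_self]

theorem inner_deriv_eq_of_inner_tau_eq_zero (ψ : ℝ → EuclideanSpace ℝ (Fin n)) {x : ℝ}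
    (hx : deriv f x ≠ 0) {w : EuclideanSpace ℝ (Fin n)} (hw : ⟪w, tau f x⟫ = 0) :
    ⟪deriv ψ x, w⟫ = ‖deriv f x‖ * ⟪nablaS f ψ x, w⟫ := by
  have hψ : deriv ψ x = ‖deriv f x‖ • sDeriv f ψ x := by
    rw [sDeriv, smul_smul, mul_inv_cancel₀ (norm_ne_zero_iff.2 hx), one_smul]
  rw [hψ, real_inner_smul_left, nablaS, inner_sub_left, real_inner_smul_left,
    real_inner_comm w (tau f x), hw, mul_zero, sub_zero]

theorem hasDerivAt_inner_nablaSIter_kappa (hf : ContDiff ℝ ∞ f) (j m : ℕ) {x : ℝ}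
    (hx : deriv f x ≠ 0) :
    HasDerivAt (fun y => ⟪nablaSIter f j (kappa f) y, nablaSIter f m (kappa f) y⟫)
      (‖deriv f x‖ * (⟪nablaSIter f (j + 1) (kappa f) x, nablaSIter f m (kappa f) x⟫
        + ⟪nablaSIter f j (kappa f) x, nablaSIter f (m + 1) (kappa f) x⟫)) x := by
  have hd : ∀ l, HasDerivAt (nablaSIter f l (kappa f)) (deriv (nablaSIter f l (kappa f)) x) x :=
    fun l => (((contDiffOn_nablaSIter_kappa hf l).contDiffAt
      ((isOpen_setOf_deriv_ne_zero hf).mem_nhds hx)).differentiableAt (by simp)).hasDerivAt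
  refine ((hd j).inner ℝ (hd m)).congr_deriv ?_
  rw [inner_deriv_eq_of_inner_tau_eq_zero _ hx (inner_nablaSIter_kappa_tau hf m hx),
    real_inner_comm,
    inner_deriv_eq_of_inner_tau_eq_zero _ hx (inner_nablaSIter_kappa_tau hf j hx)]
  simp only [nablaSIter]
  rw [real_inner_comm (nablaS f _ x)]
  ring

theorem curveLen_nonneg : 0 ≤ curveLen f :=
  intervalIntegral.integral_nonneg zero_le_one fun _ _ => norm_nonneg _

theorem curveLen_pos (hf : ContDiff ℝ ∞ f) (hd : ∀ x ∈ Icc (0 : ℝ) 1, deriv f x ≠ 0) :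
    0 < curveLen f :=
  intervalIntegral.intervalIntegral_pos_of_pos_on
    ((continuous_norm_deriv hf).intervalIntegrable 0 1)
    (fun x hx => norm_pos_iff.2 (hd x (Ioo_subset_Icc_self hx))) zero_lt_one

def arcIntegral (f : ℝ → EuclideanSpace ℝ (Fin n)) (g : ℝ → ℝ) : ℝ :=
  ∫ x in (0 : ℝ)..1, g x * ‖deriv f x‖

theorem arcIntegral_nonneg {g : ℝ → ℝ} (hg : ∀ x, 0 ≤ g x) : 0 ≤ arcIntegral f g :=
  intervalIntegral.integral_nonneg zero_le_one fun x _ => mul_nonneg (hg x) (norm_nonneg _)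

theorem arcIntegral_mul_le (hf : ContDiff ℝ ∞ f) (hd : ∀ x ∈ Icc (0 : ℝ) 1, deriv f x ≠ 0)
    (l m : ℕ) :
    arcIntegral f (fun t => ‖nablaSIter f l (kappa f) t‖ * ‖nablaSIter f m (kappa f) t‖)
      ≤ √(arcIntegral f fun t => ‖nablaSIter f l (kappa f) t‖ ^ 2)
        * √(arcIntegral f fun t => ‖nablaSIter f m (kappa f) t‖ ^ 2) :=
  integral_mul_mul_le_sqrt_mul_sqrt zero_le_one (continuousOn_nablaSIter_kappa hf hd l).norm
    (continuousOn_nablaSIter_kappa hf hd m).norm (continuous_norm_deriv hf).continuousOn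
    fun _ _ => norm_nonneg _

def agmonBound (f : ℝ → EuclideanSpace ℝ (Fin n)) (j : ℕ) : ℝ :=
  2 * arcIntegral f (fun t => ‖nablaSIter f j (kappa f) t‖ * ‖nablaSIter f (j + 1) (kappa f) t‖)
    + (curveLen f)⁻¹ * arcIntegral f (fun t => ‖nablaSIter f j (kappa f) t‖ ^ 2)

theorem norm_sq_le_agmonBound (hf : ContDiff ℝ ∞ f) (hd : ∀ x ∈ Icc (0 : ℝ) 1, deriv f x ≠ 0)
    (j : ℕ) {x : ℝ} (hx : x ∈ Icc 0 1) :
    ‖nablaSIter f j (kappa f) x‖ ^ 2 ≤ agmonBound f j := by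
  set u := nablaSIter f j (kappa f)
  set u' := nablaSIter f (j + 1) (kappa f)
  have hu := continuousOn_nablaSIter_kappa hf hd j
  have hu' := continuousOn_nablaSIter_kappa hf hd (j + 1)
  have hv := (continuous_norm_deriv hf).continuousOn (s := Icc 0 1)
  obtain ⟨y, hy, hmin⟩ := isCompact_Icc.exists_isMinOn ⟨x, hx⟩ hu.norm
  have hmin_le : ‖u y‖ ^ 2 ≤ (curveLen f)⁻¹ * arcIntegral f (fun t => ‖u t‖ ^ 2) := by
    rw [inv_mul_eq_div, le_div_iff₀ (curveLen_pos hf hd), curveLen,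
      ← intervalIntegral.integral_const_mul]
    refine intervalIntegral.integral_mono_on zero_le_one
      (ContinuousOn.intervalIntegrable_of_Icc zero_le_one (by fun_prop))
      (ContinuousOn.intervalIntegrable_of_Icc zero_le_one (by fun_prop)) fun t ht => ?_
    exact mul_le_mul_of_nonneg_right (pow_le_pow_left₀ (norm_nonneg _) (hmin ht) 2)
      (norm_nonneg _)
  have hosc : ‖u x‖ ^ 2 - ‖u y‖ ^ 2 ≤ 2 * arcIntegral f (fun t => ‖u t‖ * ‖u' t‖) := by
    simp only [← real_inner_self_eq_norm_sq]
    refine (sub_le_integral_abs_deriv hx hy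
      (fun t ht => hasDerivAt_inner_nablaSIter_kappa hf j j (hd t ht))
      (ContinuousOn.intervalIntegrable_of_Icc zero_le_one (by fun_prop))).trans ?_
    rw [arcIntegral, ← intervalIntegral.integral_const_mul]
    refine intervalIntegral.integral_mono_on zero_le_one
      (ContinuousOn.intervalIntegrable_of_Icc zero_le_one (by fun_prop))
      (ContinuousOn.intervalIntegrable_of_Icc zero_le_one (by fun_prop)) fun t _ => ?_
    rw [real_inner_comm (u t), abs_mul, abs_norm, ← two_mul, abs_mul, abs_two]
    have := abs_real_inner_le_norm (u t) (u' t)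
    have := norm_nonneg (deriv f t)
    nlinarith
  unfold agmonBound
  linarith

theorem norm_le_sqrt_agmonBound (hf : ContDiff ℝ ∞ f) (hd : ∀ x ∈ Icc (0 : ℝ) 1, deriv f x ≠ 0)
    (j : ℕ) {x : ℝ} (hx : x ∈ Icc 0 1) :
    ‖nablaSIter f j (kappa f) x‖ ≤ √(agmonBound f j) := by
  simpa using Real.abs_le_sqrt (norm_sq_le_agmonBound hf hd j hx)

theorem arcIntegral_norm_sq_le (hf : ContDiff ℝ ∞ f) (hd : ∀ x ∈ Icc (0 : ℝ) 1, deriv f x ≠ 0)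
    (j : ℕ) :
    arcIntegral f (fun t => ‖nablaSIter f (j + 1) (kappa f) t‖ ^ 2)
      ≤ ‖nablaSIter f j (kappa f) 1‖ * ‖nablaSIter f (j + 1) (kappa f) 1‖
        + ‖nablaSIter f j (kappa f) 0‖ * ‖nablaSIter f (j + 1) (kappa f) 0‖
        + arcIntegral f
          (fun t => ‖nablaSIter f j (kappa f) t‖ * ‖nablaSIter f (j + 2) (kappa f) t‖) := by
  have hu := continuousOn_nablaSIter_kappa hf hd
  have hv := (continuous_norm_deriv hf).continuousOn (s := Icc 0 1)
  have hftc := intervalIntegral.integral_eq_sub_of_hasDerivAt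
    (fun t ht => hasDerivAt_inner_nablaSIter_kappa hf j (j + 1)
      (hd t (by rwa [uIcc_of_le zero_le_one] at ht)))
    (ContinuousOn.intervalIntegrable_of_Icc zero_le_one (by fun_prop))
  simp only [mul_add, ← real_inner_self_eq_norm_sq] at hftc ⊢
  rw [intervalIntegral.integral_add
    (ContinuousOn.intervalIntegrable_of_Icc zero_le_one (by fun_prop))
    (ContinuousOn.intervalIntegrable_of_Icc zero_le_one (by fun_prop))] at hftc
  simp only [mul_comm (‖deriv f _‖)] at hftc
  have hlow : -arcIntegral f
        (fun t => ‖nablaSIter f j (kappa f) t‖ * ‖nablaSIter f (j + 2) (kappa f) t‖)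
      ≤ ∫ t in (0 : ℝ)..1,
        ⟪nablaSIter f j (kappa f) t, nablaSIter f (j + 2) (kappa f) t⟫ * ‖deriv f t‖ := by
    rw [arcIntegral, ← intervalIntegral.integral_neg]
    refine intervalIntegral.integral_mono_on zero_le_one
      (ContinuousOn.intervalIntegrable_of_Icc zero_le_one (by fun_prop))
      (ContinuousOn.intervalIntegrable_of_Icc zero_le_one (by fun_prop)) fun t _ => ?_
    have := neg_abs_le ⟪nablaSIter f j (kappa f) t, nablaSIter f (j + 2) (kappa f) t⟫
    have := abs_real_inner_le_norm (nablaSIter f j (kappa f) t) (nablaSIter f (j + 2) (kappa f) t)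
    have := norm_nonneg (deriv f t)
    nlinarith
  have h1 := real_inner_le_norm (nablaSIter f j (kappa f) 1) (nablaSIter f (j + 1) (kappa f) 1)
  have h0 := neg_le_of_abs_le
    (abs_real_inner_le_norm (nablaSIter f j (kappa f) 0) (nablaSIter f (j + 1) (kappa f) 0))
  rw [arcIntegral]
  linarith

theorem knorm_two_eq (j : ℕ) :
    knorm f j 2 = √(curveLen f) ^ (2 * j + 1)
      * √(arcIntegral f fun t => ‖nablaSIter f j (kappa f) t‖ ^ 2) := by
  simp only [knorm, arcIntegral, Real.rpow_two, Real.sqrt_eq_rpow, ← Real.rpow_natCast,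
    ← Real.rpow_mul curveLen_nonneg]
  congr 2
  push_cast
  ring

/-- Dominates the scale-invariant sup norm `L^{j+1} sup |∇ₛʲκ|`. -/
def supKnormBound (f : ℝ → EuclideanSpace ℝ (Fin n)) (j : ℕ) : ℝ :=
  √(curveLen f) ^ (2 * j + 2) * √(agmonBound f j)

theorem supKnormBound_sq_le (hf : ContDiff ℝ ∞ f) (hd : ∀ x ∈ Icc (0 : ℝ) 1, deriv f x ≠ 0)
    (j : ℕ) :
    supKnormBound f j ^ 2 ≤ 2 * knorm f j 2 * knorm f (j + 1) 2 + knorm f j 2 ^ 2 := by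
  have hR : 0 ≤ agmonBound f j :=
    (sq_nonneg _).trans (norm_sq_le_agmonBound hf hd j (x := 0) (by simp))
  have hL := curveLen_pos hf hd
  have hcs := arcIntegral_mul_le hf hd j (j + 1)
  rw [knorm_two_eq, knorm_two_eq, supKnormBound, mul_pow, Real.sq_sqrt hR]
  set ℓ := √(curveLen f)
  have hℓ : ℓ ^ 2 = curveLen f := Real.sq_sqrt hL.le
  have hℓ0 : 0 < ℓ := Real.sqrt_pos.2 hL
  set I := arcIntegral f fun t => ‖nablaSIter f j (kappa f) t‖ ^ 2
  have hI : √I ^ 2 = I := Real.sq_sqrt (arcIntegral_nonneg fun _ => sq_nonneg _)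
  calc (ℓ ^ (2 * j + 2)) ^ 2 * agmonBound f j
      ≤ (ℓ ^ (2 * j + 2)) ^ 2 * (2 * (√I
          * √(arcIntegral f fun t => ‖nablaSIter f (j + 1) (kappa f) t‖ ^ 2))
        + (ℓ ^ 2)⁻¹ * I) := by
        rw [agmonBound, hℓ]
        gcongr
    _ = _ := by
        field_simp
        linear_combination (ℓ ^ (2 * j + 2)) ^ 2 * hI.symm

theorem knorm_sq_le (hf : ContDiff ℝ ∞ f) (hd : ∀ x ∈ Icc (0 : ℝ) 1, deriv f x ≠ 0) (j : ℕ) :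
    knorm f (j + 1) 2 ^ 2
      ≤ 2 * supKnormBound f j * supKnormBound f (j + 1) + knorm f j 2 * knorm f (j + 2) 2 := by
  have hibp := arcIntegral_norm_sq_le hf hd j
  have hcs := arcIntegral_mul_le hf hd j (j + 2)
  have hb : ∀ x ∈ Icc (0 : ℝ) 1,
      ‖nablaSIter f j (kappa f) x‖ * ‖nablaSIter f (j + 1) (kappa f) x‖
        ≤ √(agmonBound f j) * √(agmonBound f (j + 1)) := fun x hx =>
    mul_le_mul (norm_le_sqrt_agmonBound hf hd j hx) (norm_le_sqrt_agmonBound hf hd (j + 1) hx)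
      (norm_nonneg _) (Real.sqrt_nonneg _)
  have hb0 := hb 0 (by simp)
  have hb1 := hb 1 (by simp)
  rw [knorm_two_eq, knorm_two_eq, knorm_two_eq, supKnormBound, supKnormBound, mul_pow,
    Real.sq_sqrt (arcIntegral_nonneg fun _ => sq_nonneg _)]
  set ℓ := √(curveLen f)
  calc (ℓ ^ (2 * (j + 1) + 1)) ^ 2
        * arcIntegral f (fun t => ‖nablaSIter f (j + 1) (kappa f) t‖ ^ 2)
      ≤ (ℓ ^ (2 * (j + 1) + 1)) ^ 2 * (2 * (√(agmonBound f j) * √(agmonBound f (j + 1)))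
        + √(arcIntegral f fun t => ‖nablaSIter f j (kappa f) t‖ ^ 2)
          * √(arcIntegral f fun t => ‖nablaSIter f (j + 2) (kappa f) t‖ ^ 2)) := by
        gcongr
        linarith
    _ = _ := by ring

theorem arcIntegral_rpow_le (hf : ContDiff ℝ ∞ f) (hd : ∀ x ∈ Icc (0 : ℝ) 1, deriv f x ≠ 0)
    (j : ℕ) {p : ℝ} (hp : 2 ≤ p) :
    arcIntegral f (fun t => ‖nablaSIter f j (kappa f) t‖ ^ p)
      ≤ √(agmonBound f j) ^ (p - 2)
        * arcIntegral f (fun t => ‖nablaSIter f j (kappa f) t‖ ^ 2) := by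
  unfold arcIntegral
  rw [← intervalIntegral.integral_const_mul]
  have hu := continuousOn_nablaSIter_kappa hf hd j
  have hv := (continuous_norm_deriv hf).continuousOn (s := Icc 0 1)
  refine intervalIntegral.integral_mono_on zero_le_one
    (((hu.norm.rpow_const fun _ _ => Or.inr (by linarith)).mul hv).intervalIntegrable_of_Icc
      zero_le_one)
    (ContinuousOn.intervalIntegrable_of_Icc zero_le_one (by fun_prop)) fun t ht => ?_
  have hsplit : ‖nablaSIter f j (kappa f) t‖ ^ p
      = ‖nablaSIter f j (kappa f) t‖ ^ (p - 2) * ‖nablaSIter f j (kappa f) t‖ ^ 2 := by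
    rw [← Real.rpow_two, ← Real.rpow_add' (norm_nonneg _) (by linarith), sub_add_cancel]
  simp only [hsplit, ← mul_assoc]
  gcongr
  exact norm_le_sqrt_agmonBound hf hd j ht

theorem knorm_le_supKnormBound_rpow_mul (hf : ContDiff ℝ ∞ f)
    (hd : ∀ x ∈ Icc (0 : ℝ) 1, deriv f x ≠ 0) (j : ℕ) {p : ℝ} (hp : 2 ≤ p) :
    knorm f j p ≤ supKnormBound f j ^ (1 - 2 / p) * knorm f j 2 ^ (2 / p) := by
  have hp0 : 0 < p := by linarith
  have hL := curveLen_pos hf hd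
  set K := √(agmonBound f j)
  have hK : 0 ≤ K := Real.sqrt_nonneg _
  set I := arcIntegral f fun t => ‖nablaSIter f j (kappa f) t‖ ^ 2
  have hI : 0 ≤ I := arcIntegral_nonneg fun _ => sq_nonneg _
  have hsqrt : ∀ m : ℕ, √(curveLen f) ^ m = curveLen f ^ ((m : ℝ) / 2) := fun m => by
    rw [Real.sqrt_eq_rpow, ← Real.rpow_natCast, ← Real.rpow_mul hL.le]
    ring_nf
  have hKp : (K ^ (p - 2)) ^ (1 / p) = K ^ (1 - 2 / p) := by
    rw [← Real.rpow_mul hK]; congr 1; field_simp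
  have hIp : I ^ (1 / p) = (I ^ (1 / 2 : ℝ)) ^ (2 / p) := by
    rw [← Real.rpow_mul hI]; congr 1; field_simp
  have hLp : curveLen f ^ ((j : ℝ) + 1 - 1 / p) = (curveLen f ^ (((2 * j + 2 : ℕ) : ℝ) / 2))
      ^ (1 - 2 / p) * (curveLen f ^ (((2 * j + 1 : ℕ) : ℝ) / 2)) ^ (2 / p) := by
    rw [← Real.rpow_mul hL.le, ← Real.rpow_mul hL.le, ← Real.rpow_add hL]
    congr 1
    push_cast
    field_simp
    ring
  calc knorm f j p
      = curveLen f ^ ((j : ℝ) + 1 - 1 / p)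
        * arcIntegral f (fun t => ‖nablaSIter f j (kappa f) t‖ ^ p) ^ (1 / p) := rfl
    _ ≤ curveLen f ^ ((j : ℝ) + 1 - 1 / p) * (K ^ (p - 2) * I) ^ (1 / p) := by
        gcongr
        · exact arcIntegral_nonneg fun _ => by positivity
        · exact arcIntegral_rpow_le hf hd j hp
    _ = supKnormBound f j ^ (1 - 2 / p) * knorm f j 2 ^ (2 / p) := by
        rw [supKnormBound, knorm_two_eq, hsqrt, hsqrt, Real.sqrt_eq_rpow I,
          Real.mul_rpow (by positivity) hI, hKp, hIp, hLp, Real.mul_rpow (by positivity) hK,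
          Real.mul_rpow (by positivity) (by positivity)]
        ring

end Curve

theorem interpolation_inequality_general (n k : ℕ) (p : ℝ) (hp : 2 ≤ p)
    (i : ℕ) (hik : i < k) :
    ∃ C : ℝ, 0 < C ∧
      ∀ f : ℝ → EuclideanSpace ℝ (Fin n),
        ContDiff ℝ (⊤ : ℕ∞) f → (∀ x ∈ Icc (0 : ℝ) 1, deriv f x ≠ 0) →
        knorm f i p
          ≤ C * knorm f 0 2 ^ (1 - ((i : ℝ) + 1 / 2 - 1 / p) / k)
              * knormSum f k 2 ^ (((i : ℝ) + 1 / 2 - 1 / p) / k) := by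
  refine ⟨2 * (4 * 29 ^ 2) ^ (k * k), by positivity, fun f hf hd => ?_⟩
  exact le_rpow_mul_rpow_of_agmon_ibp hik hp (fun j => by rw [knorm_two_eq]; positivity)
    (fun j => by rw [supKnormBound]; positivity) (supKnormBound_sq_le hf hd) (knorm_sq_le hf hd)
    (knorm_le_supKnormBound_rpow_mul hf hd i hp)

/-- Gagliardo–Nirenberg type interpolation inequality:
`‖∇ₛⁱκ‖_p ≤ C ‖κ‖₂^{1−α} ‖κ‖_{k,2}^α` with `α = (i + ½ − 1/p)/k`, `C = C(n,k,p)`. -/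
theorem interpolation_inequality (n k : ℕ) (hn : 2 ≤ n) (p : ℝ) (hp : 2 ≤ p)
    (i : ℕ) (hik : i < k) :
    ∃ C : ℝ, 0 < C ∧
      ∀ f : ℝ → EuclideanSpace ℝ (Fin n),
        ContDiff ℝ (⊤ : ℕ∞) f → (∀ x ∈ Icc (0 : ℝ) 1, deriv f x ≠ 0) →
        knorm f i p
          ≤ C * knorm f 0 2 ^ (1 - ((i : ℝ) + 1 / 2 - 1 / p) / k)
              * knormSum f k 2 ^ (((i : ℝ) + 1 / 2 - 1 / p) / k) :=
  interpolation_inequality_general n k p hp i hik
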